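/- arXiv:1307.3667 — 2 statements merged into one kernel-verified Lean document; each statement's English description precedes it below -/
import Mathlib

section
/- Let A be an MTL-chain and ∘ : A → A any map satisfying (i) x ∧ ∘(x) ≠ 0 for some x, (ii) ¬x ∧ ∘(x) ≠ 0 for some x, and (iii) x ∧ ¬x ∧ ∘(x) = 0 for all x. Then ∘(0) > 0, ∘(x) = 0 for every x with x ≠ 0 and ¬x ≠ 0 and x ∉ N(A), and ∘(x) > 0 for some x ∈ N(A) ∪ {1}, where N(A) = {x ∈ A : x ≠ 1 and ¬x = 0}. -/
open scoped Classical

/-- An MTL-chain: a linearly ordered, commutative, bounded, integral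
residuated lattice ⟨A, ∧, ∨, &, →, 0, 1⟩, where ∧/∨ are min/max,
`zer` is the bottom element 0, the monoid unit 1 is the top element,
and `himp` is the residuum of the monoid operation. -/
class MTLChain (A : Type*) extends LinearOrder A, CommMonoid A where
  zer : A
  zer_le : ∀ x : A, zer ≤ x
  le_one : ∀ x : A, x ≤ 1
  himp : A → A → A
  mul_le_iff : ∀ x y z : A, x * y ≤ z ↔ x ≤ himp y z

namespace MTLChain

variable {A : Type*} [MTLChain A]

/-- Negation ¬x = x → 0. -/
def neg (x : A) : A := himp x zer

end MTLChain

open MTLChain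

namespace MTLChain

variable {A : Type*} [MTLChain A]

theorem zer_lt_iff_ne_zer {a : A} : zer < a ↔ a ≠ zer :=
  (zer_le a).lt_iff_ne'

theorem min_eq_zer_iff {a b : A} : min a b = zer ↔ a = zer ∨ b = zer :=
  letI : OrderBot A := { bot := zer, bot_le := zer_le }
  min_eq_bot

theorem min_min_eq_zer_iff {a b c : A} :
    min (min a b) c = zer ↔ a = zer ∨ b = zer ∨ c = zer := by
  simp only [min_eq_zer_iff, or_assoc]

end MTLChain

theorem stmt11 {A : Type*} [MTLChain A] (o : A → A)
    (hi : ∃ x : A, min x (o x) ≠ zer)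
    (hii : ∃ x : A, min (neg x) (o x) ≠ zer)
    (hiii : ∀ x : A, min (min x (neg x)) (o x) = zer) :
    (zer : A) < o zer ∧
    (∀ x : A, x ≠ zer → neg x ≠ zer → ¬(x ≠ 1 ∧ neg x = zer) → o x = zer) ∧
    (∃ x : A, ((x ≠ 1 ∧ neg x = zer) ∨ x = 1) ∧ (zer : A) < o x) := by
  have htri (x : A) : x = zer ∨ neg x = zer ∨ o x = zer := min_min_eq_zer_iff.1 (hiii x)
  refine ⟨?_, fun x hx hnx _ => ((htri x).resolve_left hx).resolve_left hnx, ?_⟩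
  · obtain ⟨x, hx⟩ := hii
    rw [ne_eq, min_eq_zer_iff, not_or] at hx
    -- in a chain the witness of (ii) can only be 0
    obtain rfl : x = zer := (htri x).resolve_right (not_or.2 hx)
    exact zer_lt_iff_ne_zer.2 hx.2
  · obtain ⟨x, hx⟩ := hi
    rw [ne_eq, min_eq_zer_iff, not_or] at hx
    have hnx : neg x = zer := ((htri x).resolve_left hx.1).resolve_right hx.2
    refine ⟨x, ?_, zer_lt_iff_ne_zer.2 hx.2⟩
    by_cases h1 : x = 1
    · exact Or.inr h1
    · exact Or.inl ⟨h1, hnx⟩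
end

section
/- Let A be an MTL-chain with Delta operator Δ (Δ(x)=1 if x=1, else 0). Define ∘(x) = Δ(x ∨ ¬x). Then ∘ satisfies (c1)-(c3) and additionally the minimality law x ∨ ¬x ∨ ¬∘(x) = 1, and the crispness law ∘(x) ∨ ¬∘(x) = 1, for all x ∈ A. -/
open scoped Classical

open MTLChain

/-! Δ only takes the values 0 and 1, and `x ∨ ¬x = 1` holds exactly for
`x ∈ {0, 1}`, where `x ∧ ¬x = 0`. So `∘x = 1` for the two Boolean elements and `∘x = 0`
otherwise, from which (c1)–(c3), minimality and crispness are read off. -/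

namespace MTLChain

variable {A : Type*} [MTLChain A] {x y : A}

theorem le_neg_iff : y ≤ neg x ↔ y * x ≤ zer :=
  (mul_le_iff y x zer).symm

theorem neg_zer : neg (zer : A) = 1 :=
  le_antisymm (le_one _) (le_neg_iff.2 (one_mul (zer : A)).le)

theorem neg_one : neg (1 : A) = zer :=
  le_antisymm (by simpa using le_neg_iff.1 (le_refl (neg (1 : A)))) (zer_le _)

theorem neg_eq_one_iff : neg x = 1 ↔ x = zer := by
  refine ⟨fun h => le_antisymm ?_ (zer_le x), fun h => h ▸ neg_zer⟩
  simpa using le_neg_iff.1 h.ge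

theorem min_neg_eq_zer_of_max_neg_eq_one (h : max x (neg x) = 1) : min x (neg x) = zer := by
  rcases max_eq_iff.1 h with ⟨rfl, -⟩ | ⟨hneg, -⟩
  · rw [neg_one]
    exact min_eq_right (zer_le _)
  · rw [neg_eq_one_iff.1 hneg]
    exact min_eq_left (zer_le _)

def delta (x : A) : A := if x = 1 then 1 else zer

theorem delta_one : delta (1 : A) = 1 := if_pos rfl

theorem delta_of_ne_one (h : x ≠ 1) : delta x = zer := if_neg h

theorem delta_mono : Monotone (delta : A → A) := by
  intro x y hxy
  by_cases hx : x = 1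
  · subst hx
    rw [le_antisymm (le_one y) hxy]
  · exact (delta_of_ne_one hx).symm ▸ zer_le _

theorem max_neg_delta_eq_one (x : A) : max x (neg (delta x)) = 1 := by
  by_cases hx : x = 1
  · rw [hx]
    exact max_eq_left (le_one _)
  · rw [delta_of_ne_one hx, neg_zer]
    exact max_eq_right (le_one _)

theorem max_delta_neg_delta_eq_one (x : A) : max (delta x) (neg (delta x)) = 1 := by
  by_cases hx : x = 1
  · rw [hx, delta_one]
    exact max_eq_left (le_one _)
  · rw [delta_of_ne_one hx, neg_zer]
    exact max_eq_right (le_one _)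

def circ (x : A) : A := delta (max x (neg x))

theorem circ_eq_zer_of_min_neg_ne_zer (h : min x (neg x) ≠ zer) : circ x = zer :=
  delta_of_ne_one fun hmax => h (min_neg_eq_zer_of_max_neg_eq_one hmax)

theorem circ_zer : circ (zer : A) = 1 := by
  rw [circ, neg_zer, max_eq_right (le_one _), delta_one]

theorem circ_one : circ (1 : A) = 1 := by
  rw [circ, max_eq_left (le_one _), delta_one]

theorem circ_le_circ_of_neg_eq_zer (hx : neg x = zer) (hxy : x ≤ y) : circ x ≤ circ y := by
  have hmax : max x (neg x) = x := by
    rw [hx]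
    exact max_eq_left (zer_le x)
  rw [circ, circ, hmax]
  exact delta_mono (hxy.trans (le_max_left y (neg y)))

end MTLChain

theorem stmt13 {A : Type*} [MTLChain A] :
    let delta : A → A := fun x => if x = 1 then 1 else zer
    let o : A → A := fun x => delta (max x (neg x))
    ((∀ x : A, min x (neg x) ≠ zer → o x = zer) ∧
     (o (zer : A) = 1 ∧ o (1 : A) = 1) ∧
     (∀ x y : A, neg x = zer → x ≤ y → o x ≤ o y)) ∧
    (∀ x : A, max (max x (neg x)) (neg (o x)) = 1 ∧
       max (o x) (neg (o x)) = 1) := by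
  intro delta o
  exact ⟨⟨fun _ => circ_eq_zer_of_min_neg_ne_zer, ⟨circ_zer, circ_one⟩,
      fun _ _ => circ_le_circ_of_neg_eq_zer⟩,
    fun x => ⟨max_neg_delta_eq_one (max x (neg x)), max_delta_neg_delta_eq_one (max x (neg x))⟩⟩
end
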